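/- Let G be a nontrivial finite abelian group with primary decomposition G ≅ ∏_{i=1}^n ZMod (p_i^{e_i}) where the p_i are primes and e_i ≥ 1. Then μ(G) = ∑_{i=1}^n p_i^{e_i}. -/

import Mathlib

noncomputable def minFaithfulDegree (G : Type*) [Group G] : ℕ :=
  sInf {n : ℕ | ∃ f : G →* Equiv.Perm (Fin n), Function.Injective f}

/-!
Translating each cyclic factor on itself is a faithful action of degree `∑ pᵢ ^ eᵢ`. Conversely,
`powSocleRank q k A`, the rank of the elements of order dividing `q` in `A ^ (q ^ k)`, counts for
`A ≅ ∏ ZMod (pᵢ ^ eᵢ)` the `i` with `pᵢ = q` and `k < eᵢ`. These ranks grow along embeddings and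
add over products, and since `∑ k < e, socleWeight q k = q ^ e` for `0 < e`, the weighted sum
`primaryDegree A` equals `∑ pᵢ ^ eᵢ`. An abelian group acting faithfully embeds into the product of
its quotients by the stabilizers of orbit representatives, and the weighted sum of each such
quotient is at most its order, which is the size of the orbit.
-/

open Finset Function

section FaithfulDegree

variable {G H : Type*} [Group G] [Group H]

lemma exists_injective_perm_fin_of_injective {X : Type*} [Finite X] {f : G →* Equiv.Perm X}
    (hf : Injective f) : ∃ f' : G →* Equiv.Perm (Fin (Nat.card X)), Injective f' :=
  ⟨(Equiv.permCongrHom (Finite.equivFin X)).toMonoidHom.comp f,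
    (Equiv.permCongrHom (Finite.equivFin X)).injective.comp hf⟩

lemma minFaithfulDegree_le_of_injective {X : Type*} [Finite X] {f : G →* Equiv.Perm X}
    (hf : Injective f) : minFaithfulDegree G ≤ Nat.card X :=
  Nat.sInf_le (exists_injective_perm_fin_of_injective hf)

lemma minFaithfulDegree_congr (e : G ≃* H) : minFaithfulDegree G = minFaithfulDegree H := by
  unfold minFaithfulDegree
  congr 1
  ext n
  exact ⟨fun ⟨f, hf⟩ => ⟨f.comp e.symm.toMonoidHom, hf.comp e.symm.injective⟩,
    fun ⟨f, hf⟩ => ⟨f.comp e.toMonoidHom, hf.comp e.injective⟩⟩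

lemma minFaithfulDegree_pi_le {ι : Type*} [Fintype ι] (M : ι → Type*) [∀ i, Group (M i)]
    [∀ i, Finite (M i)] : minFaithfulDegree (∀ i, M i) ≤ ∑ i, Nat.card (M i) := by
  let _ : ∀ i, MulAction (∀ j, M j) (M i) := fun i => MulAction.compHom _ (Pi.evalMonoidHom M i)
  rw [← Nat.card_sigma]
  refine minFaithfulDegree_le_of_injective (f := MulAction.toPermHom (∀ i, M i) (Σ i, M i)) ?_
  intro g h hgh
  funext i
  simpa [MulAction.compHom_smul_def] using
    congr_arg (fun σ : Equiv.Perm (Σ i, M i) => σ ⟨i, 1⟩) hgh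

end FaithfulDegree

section PowSocle

variable {A B : Type*} [CommGroup A] [CommGroup B] (q k : ℕ)

def powSocle (A : Type*) [CommGroup A] : Subgroup A :=
  (powMonoidHom q : A →* A).ker ⊓ (powMonoidHom (q ^ k) : A →* A).range

noncomputable def powSocleRank (A : Type*) [CommGroup A] : ℕ :=
  (Nat.card (powSocle q k A)).factorization q

lemma powSocle_map_le (f : A →* B) : (powSocle q k A).map f ≤ powSocle q k B := by
  rintro _ ⟨_, ⟨ha, b, rfl⟩, rfl⟩
  exact ⟨by simpa [← map_pow] using congr_arg f ha, f b, by simp⟩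

lemma powSocleRank_le_of_injective [Finite B] {f : A →* B} (hf : Injective f) :
    powSocleRank q k A ≤ powSocleRank q k B := by
  have : Finite A := .of_injective f hf
  have hdvd : Nat.card (powSocle q k A) ∣ Nat.card (powSocle q k B) := by
    rw [← Subgroup.card_map_of_injective hf]
    exact Subgroup.card_dvd_of_le (powSocle_map_le q k f)
  exact (Nat.factorization_le_iff_dvd Nat.card_pos.ne' Nat.card_pos.ne').2 hdvd q

lemma powSocle_pi {ι : Type*} (A : ι → Type*) [∀ i, CommGroup (A i)] :
    powSocle q k (∀ i, A i) = Subgroup.pi Set.univ fun i => powSocle q k (A i) := by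
  ext a
  simp only [powSocle, Subgroup.mem_inf, MonoidHom.mem_ker, MonoidHom.mem_range,
    powMonoidHom_apply, Subgroup.mem_pi, Set.mem_univ, forall_const, funext_iff, Pi.pow_apply,
    Pi.one_apply, forall_and]
  exact and_congr_right fun _ =>
    ⟨fun ⟨b, hb⟩ i => ⟨b i, hb i⟩, fun h => ⟨_, fun i => (h i).choose_spec⟩⟩

lemma powSocleRank_pi {ι : Type*} [Fintype ι] (A : ι → Type*) [∀ i, CommGroup (A i)]
    [∀ i, Finite (A i)] : powSocleRank q k (∀ i, A i) = ∑ i, powSocleRank q k (A i) := by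
  have hcard : Nat.card (Subgroup.pi Set.univ fun i => powSocle q k (A i)) =
      ∏ i, Nat.card (powSocle q k (A i)) :=
    (Nat.card_congr (Equiv.Set.univPi fun i => (powSocle q k (A i) : Set (A i)))).trans Nat.card_pi
  rw [powSocleRank, powSocle_pi, hcard, Nat.factorization_prod fun i _ => Nat.card_pos.ne']
  simp [powSocleRank, Finsupp.finsetSum_apply]

lemma card_powSocle_of_isCyclic [IsCyclic A] [Finite A] :
    Nat.card (powSocle q k A) = (Nat.card A / (Nat.card A).gcd (q ^ k)).gcd q := by
  set R := (powMonoidHom (q ^ k) : A →* A).range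
  have hker : (powMonoidHom q : R →* R).ker = (powMonoidHom q : A →* A).ker.subgroupOf R := by
    ext x
    simp [Subgroup.mem_subgroupOf, Subtype.ext_iff]
  rw [← IsCyclic.card_powMonoidHom_range A (q ^ k), ← IsCyclic.card_powMonoidHom_ker R q, hker,
    powSocle, ← Subgroup.subgroupOf_map_subtype, Subgroup.card_map_of_injective R.subtype_injective]

lemma powSocleRank_zmod {p e : ℕ} (hp : p.Prime) :
    powSocleRank q k (Multiplicative (ZMod (p ^ e))) = if q = p ∧ k < e then 1 else 0 := by
  have : NeZero (p ^ e) := ⟨pow_ne_zero _ hp.ne_zero⟩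
  rw [powSocleRank, card_powSocle_of_isCyclic, Nat.card_congr Multiplicative.toAdd, Nat.card_zmod]
  by_cases hqp : q = p
  · subst hqp
    by_cases hk : k < e
    · rw [Nat.gcd_eq_right (pow_dvd_pow q hk.le), Nat.pow_div hk.le hp.pos,
        Nat.gcd_eq_right (dvd_pow_self q (by omega)), hp.factorization_self, if_pos ⟨rfl, hk⟩]
    · rw [Nat.gcd_eq_left (pow_dvd_pow q (not_lt.1 hk)), Nat.div_self (pow_pos hp.pos e),
        Nat.gcd_one_left, Nat.factorization_one, Finsupp.coe_zero, Pi.zero_apply, if_neg (by omega)]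
  · rw [if_neg (by tauto)]
    by_cases hq : q.Prime
    · refine Nat.factorization_eq_zero_of_not_dvd fun hdvd => ?_
      have hdvd_pow : q ∣ p ^ e :=
        hdvd.trans ((Nat.gcd_dvd_left _ _).trans (Nat.div_dvd_of_dvd (Nat.gcd_dvd_left _ _)))
      exact hqp ((Nat.prime_dvd_prime_iff_eq hq hp).1 (hq.dvd_of_dvd_pow hdvd_pow))
    · exact Nat.factorization_eq_zero_of_not_prime _ hq

lemma prime_and_pow_dvd_card_of_powSocleRank_ne_zero [Finite A] (h : powSocleRank q k A ≠ 0) :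
    q.Prime ∧ q ^ (k + 1) ∣ Nat.card A := by
  have hq : q.Prime := by_contra fun hq => h (Nat.factorization_eq_zero_of_not_prime _ hq)
  have : Fact q.Prime := ⟨hq⟩
  have hne : powSocle q k A ≠ ⊥ := fun hbot => h (by simp [powSocleRank, hbot])
  obtain ⟨⟨_, hq1, y, rfl⟩, hy⟩ := Subgroup.ne_bot_iff_exists_ne_one.1 hne
  have hy : ¬ y ^ q ^ k = 1 := fun h1 => hy (Subtype.ext h1)
  refine ⟨hq, orderOf_eq_prime_pow hy ?_ ▸ orderOf_dvd_natCard y⟩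
  simpa [pow_succ, pow_mul] using hq1

end PowSocle

def socleWeight (q k : ℕ) : ℕ := q ^ (k + 1) - q ^ k + if k = 0 then 1 else 0

lemma sum_range_socleWeight {q : ℕ} (hq : 1 ≤ q) (e : ℕ) :
    ∑ k ∈ range e, socleWeight q k = if e = 0 then 0 else q ^ e := by
  rcases Nat.eq_zero_or_pos e with rfl | he
  · simp
  simp only [socleWeight]
  rw [if_neg he.ne', sum_add_distrib, sum_range_tsub (pow_right_mono₀ hq), sum_ite_eq' (range e) 0,
    if_pos (mem_range.2 he), pow_zero, Nat.sub_add_cancel (Nat.one_le_pow _ _ hq)]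

section PrimaryDegree

variable {A B : Type*} [CommGroup A] [CommGroup B]

-- The ranges contain every `(q, k)` with `powSocleRank q k A ≠ 0`.
noncomputable def primaryDegree (A : Type*) [CommGroup A] : ℕ :=
  ∑ q ∈ range (Nat.card A + 1), ∑ k ∈ range (Nat.card A), powSocleRank q k A * socleWeight q k

lemma primaryDegree_eq_sum [Finite A] {N : ℕ} (hN : Nat.card A ≤ N) :
    primaryDegree A =
      ∑ q ∈ range (N + 1), ∑ k ∈ range N, powSocleRank q k A * socleWeight q k := by
  have hvanish : ∀ q k, Nat.card A < q ∨ Nat.card A ≤ k → powSocleRank q k A = 0 := by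
    intro q k hqk
    by_contra hne
    obtain ⟨hq, hdvd⟩ := prime_and_pow_dvd_card_of_powSocleRank_ne_zero q k hne
    have hle := Nat.le_of_dvd Nat.card_pos hdvd
    have h1 := Nat.le_self_pow (by omega : k + 1 ≠ 0) q
    have h2 := Nat.lt_pow_self (n := k + 1) hq.one_lt
    omega
  unfold primaryDegree
  rw [sum_subset (range_subset_range.2 (by omega : Nat.card A + 1 ≤ N + 1))]
  · refine sum_congr rfl fun q _ => sum_subset (range_subset_range.2 hN) fun k _ hk => ?_
    rw [hvanish q k (.inr (by simpa using hk)), zero_mul]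
  · intro q _ hq
    refine sum_eq_zero fun k _ => ?_
    rw [hvanish q k (.inl (by simp at hq; omega)), zero_mul]

lemma primaryDegree_le_of_injective [Finite B] {f : A →* B} (hf : Injective f) :
    primaryDegree A ≤ primaryDegree B := by
  have : Finite A := .of_injective f hf
  rw [primaryDegree_eq_sum (Nat.card_le_card_of_injective f hf), primaryDegree]
  exact sum_le_sum fun q _ => sum_le_sum fun k _ =>
    Nat.mul_le_mul_right _ (powSocleRank_le_of_injective q k hf)

lemma primaryDegree_congr [Finite A] (e : A ≃* B) : primaryDegree A = primaryDegree B :=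
  have : Finite B := .of_equiv A e.toEquiv
  le_antisymm (primaryDegree_le_of_injective (f := e.toMonoidHom) e.injective)
    (primaryDegree_le_of_injective (f := e.symm.toMonoidHom) e.symm.injective)

lemma primaryDegree_pi {ι : Type*} [Fintype ι] (A : ι → Type*) [∀ i, CommGroup (A i)]
    [∀ i, Finite (A i)] : primaryDegree (∀ i, A i) = ∑ i, primaryDegree (A i) := by
  set N := Nat.card (∀ i, A i)
  have hN : ∀ i, Nat.card (A i) ≤ N := fun i =>
    Nat.card_le_card_of_surjective _ (surjective_eval i)
  simp_rw [primaryDegree_eq_sum (hN _), primaryDegree, powSocleRank_pi, sum_mul]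
  calc _ = ∑ q ∈ range (N + 1), ∑ i, ∑ k ∈ range N, powSocleRank q k (A i) * socleWeight q k :=
        sum_congr rfl fun q _ => sum_comm
    _ = _ := sum_comm

lemma primaryDegree_zmod {p e : ℕ} (hp : p.Prime) :
    primaryDegree (Multiplicative (ZMod (p ^ e))) = if e = 0 then 0 else p ^ e := by
  have : NeZero (p ^ e) := ⟨pow_ne_zero _ hp.ne_zero⟩
  set N := p ^ (e + 1)
  have hcard : Nat.card (Multiplicative (ZMod (p ^ e))) ≤ N := by
    simpa using Nat.pow_le_pow_right hp.pos e.le_succ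
  have hp_mem : p ∈ range (N + 1) :=
    mem_range.2 (Nat.lt_succ_of_le (Nat.le_self_pow e.succ_ne_zero p))
  have he : e ≤ N := (Nat.lt_pow_self hp.one_lt).le.trans (Nat.pow_le_pow_right hp.pos e.le_succ)
  rw [primaryDegree_eq_sum hcard]
  simp only [powSocleRank_zmod _ _ hp, ite_and, ite_mul, one_mul, zero_mul, sum_ite_irrel,
    sum_const_zero, sum_ite_eq', if_pos hp_mem, ← mem_range, sum_ite_mem, range_inter_range,
    min_eq_right he, sum_range_socleWeight hp.one_lt.le]

end PrimaryDegree

lemma Finset.sum_le_prod_of_two_le {ι : Type*} {s : Finset ι} {f : ι → ℕ}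
    (hf : ∀ i ∈ s, 2 ≤ f i) : ∑ i ∈ s, f i ≤ ∏ i ∈ s, f i := by
  rcases s.eq_empty_or_nonempty with rfl | hs
  · simp
  induction hs using Finset.Nonempty.cons_induction with
  | singleton a => simp
  | cons a s _ hs ih =>
    rw [sum_cons, prod_cons]
    have hfs := fun i hi => hf i (mem_cons_of_mem hi)
    have hsum : 2 ≤ ∑ i ∈ s, f i :=
      (hfs _ hs.choose_spec).trans (single_le_sum (by simp) hs.choose_spec)
    calc f a + ∑ i ∈ s, f i ≤ f a * ∑ i ∈ s, f i := Nat.add_le_mul (hf a (mem_cons_self a s)) hsum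
      _ ≤ f a * ∏ i ∈ s, f i := Nat.mul_le_mul_left _ (ih hfs)

lemma exists_mulEquiv_pi_zmod_primePow (A : Type*) [CommGroup A] [Finite A] :
    ∃ (ι : Type) (_ : Fintype ι) (p e : ι → ℕ), (∀ i, (p i).Prime) ∧
      Nonempty (A ≃* ∀ i, Multiplicative (ZMod (p i ^ e i))) := by
  obtain ⟨ι, _, p, hp, e, ⟨φ⟩⟩ := AddCommGroup.equiv_directSum_zmod_of_finite (Additive A)
  exact ⟨ι, inferInstance, p, e, hp, ⟨MulEquiv.toAdditive.symm <| φ.trans <|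
    (DirectSum.addEquivProd _).trans (MulEquiv.piMultiplicative _).toAdditiveRight⟩⟩

lemma primaryDegree_le_card {A : Type*} [CommGroup A] [Finite A] :
    primaryDegree A ≤ Nat.card A := by
  classical
  obtain ⟨ι, _, p, e, hp, ⟨φ⟩⟩ := exists_mulEquiv_pi_zmod_primePow A
  have : ∀ i, NeZero (p i ^ e i) := fun i => ⟨pow_ne_zero _ (hp i).ne_zero⟩
  rw [primaryDegree_congr φ, primaryDegree_pi, Nat.card_congr φ.toEquiv, Nat.card_pi]
  simp only [primaryDegree_zmod (hp _), Nat.card_congr Multiplicative.toAdd, Nat.card_zmod]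
  simp_rw [← ite_not (e _ = 0), ← sum_filter]
  rw [← prod_filter_of_ne (p := fun i => e i ≠ 0) fun i _ h he => h (by simp [he])]
  exact sum_le_prod_of_two_le fun i hi =>
    (hp i).two_le.trans (Nat.le_self_pow (mem_filter.1 hi).2 _)

section Orbits

open MulAction

variable {G X : Type*} [CommGroup G]

lemma injective_pi_quotient_stabilizer_out [MulAction G X] [FaithfulSMul G X] :
    Injective (MonoidHom.pi fun ω : orbitRel.Quotient G X =>
      QuotientGroup.mk' (stabilizer G ω.out)) := by
  rw [injective_iff_map_eq_one]
  intro g hg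
  refine eq_of_smul_eq_smul (α := X) fun x => ?_
  have hfix : g • (⟦x⟧ : orbitRel.Quotient G X).out = (⟦x⟧ : orbitRel.Quotient G X).out :=
    (QuotientGroup.eq_one_iff g).1 (congrFun hg ⟦x⟧)
  obtain ⟨h, hh : h • x = _⟩ := Quotient.mk_out (s := orbitRel G X) x
  rw [← hh, smul_smul, mul_comm, ← smul_smul] at hfix
  rw [one_smul]
  exact smul_left_cancel h hfix

lemma primaryDegree_le_card_of_injective [Finite X] {f : G →* Equiv.Perm X} (hf : Injective f) :
    primaryDegree G ≤ Nat.card X := by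
  let _ : MulAction G X := compHom X f
  have : FaithfulSMul G X := ⟨fun h => hf (Equiv.ext h)⟩
  have : Finite G := .of_injective f hf
  have : Fintype (orbitRel.Quotient G X) := .ofFinite _
  calc primaryDegree G ≤ primaryDegree (∀ ω : orbitRel.Quotient G X, G ⧸ stabilizer G ω.out) :=
        primaryDegree_le_of_injective injective_pi_quotient_stabilizer_out
    _ = ∑ ω : orbitRel.Quotient G X, primaryDegree (G ⧸ stabilizer G ω.out) := primaryDegree_pi _
    _ ≤ ∑ ω : orbitRel.Quotient G X, Nat.card (G ⧸ stabilizer G ω.out) :=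
        sum_le_sum fun _ _ => primaryDegree_le_card
    _ = Nat.card X := by
        rw [Nat.card_congr (selfEquivSigmaOrbitsQuotientStabilizer G X), Nat.card_sigma]

end Orbits

lemma primaryDegree_le_minFaithfulDegree {G : Type*} [CommGroup G] [Finite G] :
    primaryDegree G ≤ minFaithfulDegree G := by
  obtain ⟨f, hf⟩ := Nat.sInf_mem (s := {n | ∃ f : G →* Equiv.Perm (Fin n), Injective f})
    ⟨_, exists_injective_perm_fin_of_injective (f := MulAction.toPermHom G G)
      MulAction.toPerm_injective⟩
  simpa [minFaithfulDegree] using primaryDegree_le_card_of_injective hf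

theorem minFaithfulDegree_pi_zmod {ι : Type*} [Fintype ι] {p e : ι → ℕ} (hp : ∀ i, (p i).Prime)
    (he : ∀ i, e i ≠ 0) :
    minFaithfulDegree (∀ i, Multiplicative (ZMod (p i ^ e i))) = ∑ i, p i ^ e i := by
  have : ∀ i, NeZero (p i ^ e i) := fun i => ⟨pow_ne_zero _ (hp i).ne_zero⟩
  have hdeg : primaryDegree (∀ i, Multiplicative (ZMod (p i ^ e i))) = ∑ i, p i ^ e i := by
    simp [primaryDegree_pi, primaryDegree_zmod (hp _), he]
  refine le_antisymm ?_ (hdeg ▸ primaryDegree_le_minFaithfulDegree)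
  simpa [Nat.card_congr Multiplicative.toAdd] using
    minFaithfulDegree_pi_le fun i => Multiplicative (ZMod (p i ^ e i))

theorem mu_abelian_general (G : Type*) [CommGroup G]
    (n : ℕ) (p : Fin n → ℕ) (hp : ∀ i, (p i).Prime)
    (e : Fin n → ℕ) (he : ∀ i, 1 ≤ e i)
    (iso : G ≃* ∀ i : Fin n, Multiplicative (ZMod (p i ^ e i))) :
    minFaithfulDegree G = ∑ i : Fin n, p i ^ e i := by
  rw [minFaithfulDegree_congr iso,
    minFaithfulDegree_pi_zmod hp fun i => Nat.one_le_iff_ne_zero.1 (he i)]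

theorem mu_abelian (G : Type*) [CommGroup G] [Finite G] [Nontrivial G]
    (n : ℕ) (p : Fin n → ℕ) (hp : ∀ i, (p i).Prime)
    (e : Fin n → ℕ) (he : ∀ i, 1 ≤ e i)
    (iso : G ≃* ∀ i : Fin n, Multiplicative (ZMod (p i ^ e i))) :
    minFaithfulDegree G = ∑ i : Fin n, p i ^ e i :=
  mu_abelian_general G n p hp e he iso
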